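/- arXiv:math/0701082 — 7 statements merged into one kernel-verified Lean document; each statement's English description precedes it below -/
import Mathlib

section
/- Let A ∈ gl(2,C), n a positive integer, and define L_n(X) = nX + [A,X]. Let R = n·I + A - adj(A), where adj(A) denotes the adjugate of A. If R is invertible, then L_n is invertible, and n·L_n^{-1}(X) = X - R^{-1}[A, X] for all X ∈ gl(2,C). -/
open Matrix

/-- The linear map `L_n(X) = n•X + [A, X]` on `gl(2,ℂ)`. -/
noncomputable def Lmap (A : Matrix (Fin 2) (Fin 2) ℂ) (n : ℕ) :
    Matrix (Fin 2) (Fin 2) ℂ →ₗ[ℂ] Matrix (Fin 2) (Fin 2) ℂ :=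
  (n : ℂ) • LinearMap.id + (LinearMap.mulLeft ℂ A - LinearMap.mulRight ℂ A)

lemma adj_add_self (A : Matrix (Fin 2) (Fin 2) ℂ) :
    A.adjugate = A.trace • (1 : Matrix (Fin 2) (Fin 2) ℂ) - A := by
  rw [Matrix.adjugate_fin_two, Matrix.trace_fin_two]
  ext i j
  fin_cases i <;> fin_cases j <;> simp [Matrix.one_apply]

/-- If `R = n•I + A - adj(A)` is invertible then `L_n` is invertible, with inverse given by
`n • L_n⁻¹(X) = X - R⁻¹ [A, X]` (stated as `L_n (X - R⁻¹[A,X]) = n • X`). -/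
theorem stmt2 (A : Matrix (Fin 2) (Fin 2) ℂ) (n : ℕ) (hn : 0 < n)
    (R : Matrix (Fin 2) (Fin 2) ℂ)
    (hRdef : R = (n : ℂ) • (1 : Matrix (Fin 2) (Fin 2) ℂ) + A - A.adjugate)
    (hRu : IsUnit R) :
    Function.Bijective (Lmap A n) ∧
    ∀ X : Matrix (Fin 2) (Fin 2) ℂ,
      Lmap A n (X - R⁻¹ * (A * X - X * A)) = (n : ℂ) • X := by
  have hRdef' : R = ((n : ℂ) - A.trace) • (1 : Matrix (Fin 2) (Fin 2) ℂ)
      + ((2 : ℂ) • A) := by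
    rw [hRdef, adj_add_self]; module
  have hdet : IsUnit R.det := (Matrix.isUnit_iff_isUnit_det R).mp hRu
  have hRR : R * R⁻¹ = 1 := Matrix.mul_nonsing_inv R hdet
  have hRR' : R⁻¹ * R = 1 := Matrix.nonsing_inv_mul R hdet
  -- A commutes with R
  have hcomm : A * R = R * A := by
    rw [hRdef']
    simp [Matrix.mul_add, Matrix.add_mul, mul_smul_comm, smul_mul_assoc]
  have hcomm' : A * R⁻¹ = R⁻¹ * A := by
    calc A * R⁻¹ = R⁻¹ * R * (A * R⁻¹) := by rw [hRR', Matrix.one_mul]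
      _ = R⁻¹ * (R * A) * R⁻¹ := by noncomm_ring
      _ = R⁻¹ * (A * R) * R⁻¹ := by rw [hcomm]
      _ = R⁻¹ * A * (R * R⁻¹) := by noncomm_ring
      _ = R⁻¹ * A := by rw [hRR, Matrix.mul_one]
  -- Cayley–Hamilton for 2×2
  have hCH : A * A = A.trace • A - A.det • (1 : Matrix (Fin 2) (Fin 2) ℂ) := by
    have h := Matrix.mul_adjugate A
    rw [adj_add_self, Matrix.mul_sub, Matrix.mul_smul, Matrix.mul_one] at h
    rw [sub_eq_iff_eq_add] at h
    rw [h]; abel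
  -- key trace identity: A*C + C*A = trace A • C for C = [A,X]
  have hkey : ∀ X : Matrix (Fin 2) (Fin 2) ℂ,
      A * (A * X - X * A) + (A * X - X * A) * A = A.trace • (A * X - X * A) := by
    intro X
    calc A * (A * X - X * A) + (A * X - X * A) * A
        = (A * A) * X - X * (A * A) := by noncomm_ring
      _ = A.trace • (A * X - X * A) := by
          rw [hCH]
          simp only [Matrix.sub_mul, Matrix.mul_sub, smul_mul_assoc, mul_smul_comm,
            Matrix.one_mul, Matrix.mul_one]
          module
  -- main formula
  have hmain : ∀ X : Matrix (Fin 2) (Fin 2) ℂ,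
      Lmap A n (X - R⁻¹ * (A * X - X * A)) = (n : ℂ) • X := by
    intro X
    set C := A * X - X * A with hC
    clear_value C
    have h2 : C * A = A.trace • C - A * C := by
      rw [eq_sub_iff_add_eq, add_comm]; exact (hC ▸ hkey X)
    have hRC : R * C = (n : ℂ) • C + (A * C - C * A) := by
      rw [hRdef', Matrix.add_mul, smul_mul_assoc, Matrix.one_mul, smul_mul_assoc, h2]
      module
    have hAR : A * (R⁻¹ * C) - (R⁻¹ * C) * A = R⁻¹ * (A * C - C * A) := by
      rw [Matrix.mul_sub, ← Matrix.mul_assoc, ← Matrix.mul_assoc, hcomm', Matrix.mul_assoc, Matrix.mul_assoc]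
    have hfin : C - R⁻¹ * (A * C - C * A) = (n : ℂ) • (R⁻¹ * C) := by
      have h3 : R⁻¹ * (R * C) = R⁻¹ * ((n : ℂ) • C + (A * C - C * A)) := by rw [hRC]
      rw [← Matrix.mul_assoc, hRR', Matrix.one_mul, Matrix.mul_add, Matrix.mul_smul] at h3
      rw [sub_eq_iff_eq_add]; exact h3
    simp only [Lmap, LinearMap.add_apply, LinearMap.smul_apply, LinearMap.id_apply,
      LinearMap.sub_apply, LinearMap.mulLeft_apply, LinearMap.mulRight_apply]
    have expand : A * (X - R⁻¹ * C) - (X - R⁻¹ * C) * A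
        = C - (A * (R⁻¹ * C) - (R⁻¹ * C) * A) := by
      rw [hC]; noncomm_ring
    rw [expand, hAR, hfin]
    module
  refine ⟨?_, hmain⟩
  have hn' : (n : ℂ) ≠ 0 := Nat.cast_ne_zero.mpr hn.ne'
  have hsurj : Function.Surjective (Lmap A n) := by
    intro Y
    refine ⟨(n : ℂ)⁻¹ • (Y - R⁻¹ * (A * Y - Y * A)), ?_⟩
    rw [LinearMap.map_smul, hmain Y, smul_smul, inv_mul_cancel₀ hn', one_smul]
  exact ⟨(LinearMap.injective_iff_surjective).mpr hsurj, hsurj⟩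
end

section
/- Let X be a 2×2 complex matrix with trace zero, and let μ be an eigenvalue of X. Then the operator norm of exp(X) satisfies ‖exp(X)‖ ≤ c·e^{|Re μ|} for a constant c depending continuously on X; concretely, ‖exp(X)‖ ≤ (1 + ‖X‖)·e^{|Re μ|}. -/
open Matrix Polynomial
open scoped Matrix.Norms.L2Operator

/-! Cayley–Hamilton gives `X ^ 2 = μ ^ 2 • 1`, so the exponential series splits into its even part
`cosh μ • 1` and its odd part `(sinh μ / μ) • X`. Both scalar coefficients are bounded by
`e ^ |Re μ|`: for `cosh` directly from `exp`, for `sinh μ / μ` by the mean value inequality along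
the segment `[0, μ]`. -/

namespace Complex

theorem norm_cosh_le_exp_abs_re (z : ℂ) : ‖cosh z‖ ≤ Real.exp |z.re| := by
  have h₁ : Real.exp z.re ≤ Real.exp |z.re| := Real.exp_le_exp.2 (le_abs_self _)
  have h₂ : Real.exp (-z.re) ≤ Real.exp |z.re| := Real.exp_le_exp.2 (neg_le_abs _)
  calc ‖cosh z‖ = ‖exp z + exp (-z)‖ / 2 := by rw [cosh, norm_div, Complex.norm_two]
    _ ≤ (Real.exp z.re + Real.exp (-z.re)) / 2 := by
        gcongr
        simpa [Complex.norm_exp] using norm_add_le (exp z) (exp (-z))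
    _ ≤ Real.exp |z.re| := by linarith

theorem norm_sinh_le_norm_mul_exp_abs_re (z : ℂ) : ‖sinh z‖ ≤ ‖z‖ * Real.exp |z.re| := by
  have hderiv : ∀ t ∈ Set.Icc (0 : ℝ) 1,
      HasDerivWithinAt (fun t : ℝ => sinh (t * z)) (cosh (t * z) * z) (Set.Icc 0 1) t := by
    intro t _
    have hline : HasDerivAt (fun t : ℝ => (t : ℂ) * z) z t := by
      simpa using (ofRealCLM.hasDerivAt (x := t)).mul_const z
    exact ((hasDerivAt_sinh _).comp t hline).hasDerivWithinAt
  have hbound : ∀ t ∈ Set.Icc (0 : ℝ) 1, ‖cosh (t * z) * z‖ ≤ Real.exp |z.re| * ‖z‖ := by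
    intro t ht
    have hre : |((t : ℂ) * z).re| ≤ |z.re| := by
      rw [re_ofReal_mul, abs_mul, abs_of_nonneg ht.1]
      exact mul_le_of_le_one_left (abs_nonneg _) ht.2
    rw [norm_mul]
    gcongr
    exact (norm_cosh_le_exp_abs_re _).trans (Real.exp_le_exp.2 hre)
  simpa [mul_comm] using (convex_Icc (0 : ℝ) 1).norm_image_sub_le_of_norm_hasDerivWithin_le
    hderiv hbound (Set.left_mem_Icc.2 zero_le_one) (Set.right_mem_Icc.2 zero_le_one)

end Complex

open Complex
open scoped Nat

noncomputable def sinhc (z : ℂ) : ℂ := if z = 0 then 1 else sinh z / z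

theorem hasSum_sinhc (z : ℂ) : HasSum (fun n ↦ z ^ (2 * n) / (2 * n + 1)!) (sinhc z) := by
  by_cases hz : z = 0
  · subst hz
    simpa [sinhc] using hasSum_single (f := fun n : ℕ ↦ (0 : ℂ) ^ (2 * n) / (2 * n + 1)!) 0
      (fun n hn ↦ by simp [hn])
  · rw [sinhc, if_neg hz]
    have hterm (n : ℕ) : z ^ (2 * n + 1) / (2 * n + 1)! / z = z ^ (2 * n) / (2 * n + 1)! := by
      field_simp
      ring
    simpa only [hterm] using (hasSum_sinh z).div_const z

theorem norm_sinhc_le_exp_abs_re (z : ℂ) : ‖sinhc z‖ ≤ Real.exp |z.re| := by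
  by_cases hz : z = 0
  · simp [sinhc, hz]
  · rw [sinhc, if_neg hz, norm_div, div_le_iff₀ (norm_pos_iff.2 hz), mul_comm]
    exact norm_sinh_le_norm_mul_exp_abs_re z

theorem Matrix.sq_eq_smul_one_of_charpoly_eq {n R : Type*} [Fintype n] [DecidableEq n]
    [CommRing R] {M : Matrix n n R} {μ : R} (h : M.charpoly = (X - C μ) * (X + C μ)) :
    M ^ 2 = μ ^ 2 • (1 : Matrix n n R) := by
  have hcp : M.charpoly = X ^ 2 - C (μ ^ 2) := by rw [h, C_pow]; ring
  have := M.aeval_self_charpoly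
  rwa [hcp, map_sub, aeval_X_pow, aeval_C, sub_eq_zero, Algebra.algebraMap_eq_smul_one] at this

section SquareScalar

variable {A : Type*} [NormedRing A] [NormedAlgebra ℂ A] {a : A} {μ : ℂ}

theorem NormedSpace.exp_eq_cosh_smul_one_add_sinhc_smul (h : a ^ 2 = μ ^ 2 • (1 : A)) :
    NormedSpace.exp a = cosh μ • (1 : A) + sinhc μ • a := by
  have heven (n : ℕ) : a ^ (2 * n) = μ ^ (2 * n) • (1 : A) := by
    rw [pow_mul, h, _root_.smul_pow, one_pow, ← pow_mul]
  have hodd (n : ℕ) : a ^ (2 * n + 1) = μ ^ (2 * n) • a := by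
    rw [pow_succ, heven, smul_mul_assoc, one_mul]
  rw [NormedSpace.exp_eq_tsum ℂ]
  refine HasSum.tsum_eq (HasSum.even_add_odd ?_ ?_)
  · convert (hasSum_cosh μ).smul_const (1 : A) using 2 with n
    rw [heven, smul_smul, div_eq_inv_mul]
  · convert (hasSum_sinhc μ).smul_const a using 2 with n
    rw [hodd, smul_smul, div_eq_inv_mul]

theorem NormedSpace.norm_exp_le_of_sq_eq_smul_one [NormOneClass A] (h : a ^ 2 = μ ^ 2 • (1 : A)) :
    ‖NormedSpace.exp a‖ ≤ (1 + ‖a‖) * Real.exp |μ.re| := by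
  rw [NormedSpace.exp_eq_cosh_smul_one_add_sinhc_smul h]
  calc ‖cosh μ • (1 : A) + sinhc μ • a‖ ≤ ‖cosh μ‖ + ‖sinhc μ‖ * ‖a‖ := by
        simpa only [norm_smul, norm_one, mul_one] using
          norm_add_le (cosh μ • (1 : A)) (sinhc μ • a)
    _ ≤ Real.exp |μ.re| + Real.exp |μ.re| * ‖a‖ := by
        gcongr
        · exact norm_cosh_le_exp_abs_re μ
        · exact norm_sinhc_le_exp_abs_re μ
    _ = (1 + ‖a‖) * Real.exp |μ.re| := by ring

end SquareScalar

theorem stmt4_general (M : Matrix (Fin 2) (Fin 2) ℂ) (μ : ℂ)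
    (hμ : M.charpoly = (X - C μ) * (X + C μ)) :
    ‖NormedSpace.exp M‖ ≤ (1 + ‖M‖) * Real.exp |μ.re| :=
  NormedSpace.norm_exp_le_of_sq_eq_smul_one (Matrix.sq_eq_smul_one_of_charpoly_eq hμ)

/-- For a traceless `2×2` complex matrix `M` with eigenvalue `μ` (so the eigenvalues are
`±μ`), the operator norm of `exp M` satisfies `‖exp M‖ ≤ (1 + ‖M‖)·e^{|Re μ|}`. -/
theorem stmt4 (M : Matrix (Fin 2) (Fin 2) ℂ) (htr : M.trace = 0) (μ : ℂ)
    (hμ : M.charpoly = (X - C μ) * (X + C μ)) :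
    ‖NormedSpace.exp M‖ ≤ (1 + ‖M‖) * Real.exp |μ.re| :=
  stmt4_general M μ hμ
end

section
/- Let A ∈ sl(2,C) with real positive eigenvalue μ, with eigenline L₊ for eigenvalue μ and eigenline L₋ for eigenvalue -μ. Then for every line L ∈ CP¹ with L ≠ L₊, the line exp(xA)·L converges to L₋ in CP¹ as x → -∞. -/
open Matrix Filter

/-- The orthogonal projection matrix onto the line in `ℂ²` spanned by `w`.  Convergence of
lines in `ℂP¹` is equivalent to convergence of these projection matrices. -/
noncomputable def projLine (w : Fin 2 → ℂ) : Matrix (Fin 2) (Fin 2) ℂ :=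
  ((‖w 0‖ ^ 2 + ‖w 1‖ ^ 2 : ℝ) : ℂ)⁻¹ • Matrix.vecMulVec w (fun i => starRingEnd ℂ (w i))

/-!
Write `w = a v₊ + b v₋`; the hypothesis `L ≠ L₊` means `b ≠ 0`. Then
`exp(xA) w = b e^{-xμ} (e^{2xμ} (a/b) v₊ + v₋)`, so the line `exp(xA)·L` is spanned by
`e^{2xμ} (a/b) v₊ + v₋`, which tends to `v₋ ≠ 0` as `x → -∞`; the line map is continuous there.
-/

open NormedSpace Topology

theorem Matrix.pow_mulVec_of_mulVec_eq_smul {R n : Type*} [CommSemiring R] [Fintype n]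
    [DecidableEq n] {M : Matrix n n R} {v : n → R} {c : R} (h : M *ᵥ v = c • v) (k : ℕ) :
    (M ^ k) *ᵥ v = c ^ k • v := by
  induction k with
  | zero => simp
  | succ k ih => rw [pow_succ', ← mulVec_mulVec, ih, mulVec_smul, h, smul_smul, pow_succ]

theorem Matrix.exp_mulVec_of_mulVec_eq_smul {𝕂 n : Type*} [RCLike 𝕂] [Fintype n]
    [DecidableEq n] {M : Matrix n n 𝕂} {v : n → 𝕂} {c : 𝕂} (h : M *ᵥ v = c • v) :
    exp M *ᵥ v = exp c • v := by
  -- any norm on matrices will do to sum the exponential series; `exp` itself does not depend on it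
  open scoped Norms.Operator in
  refine (((exp_series_hasSum_exp' (𝕂 := 𝕂) M).map (mulVec.addMonoidHomLeft v)
    (continuous_id.matrix_mulVec continuous_const))).unique ?_
  simpa [mulVec.addMonoidHomLeft, Function.comp_def, smul_mulVec,
    pow_mulVec_of_mulVec_eq_smul h, smul_smul] using (exp_series_hasSum_exp' (𝕂 := 𝕂) c).smul_const v

theorem Matrix.hasEigenvector_toLin' {K n : Type*} [Field K] [Fintype n] [DecidableEq n]
    {M : Matrix n n K} {v : n → K} {c : K} (h : M *ᵥ v = c • v) (hv : v ≠ 0) :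
    Module.End.HasEigenvector (toLin' M) c v :=
  Module.End.hasEigenvector_iff.mpr ⟨Module.End.mem_eigenspace_iff.mpr (by simpa using h), hv⟩

theorem Module.End.exists_smul_add_smul_eq_of_hasEigenvector {K V : Type*} [Field K]
    [AddCommGroup V] [Module K V] [FiniteDimensional K V] (hV : Module.finrank K V = 2)
    {f : Module.End K V} {c₁ c₂ : K} {v₁ v₂ : V} (h₁ : f.HasEigenvector c₁ v₁)
    (h₂ : f.HasEigenvector c₂ v₂) (hne : c₁ ≠ c₂) (w : V) :
    ∃ a b : K, a • v₁ + b • v₂ = w := by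
  have hinj : Function.Injective ![c₁, c₂] := by
    intro i j; fin_cases i <;> fin_cases j <;> simp [hne, hne.symm]
  have hli : LinearIndependent K ![v₁, v₂] :=
    f.eigenvectors_linearIndependent' _ hinj _ (by intro i; fin_cases i <;> assumption)
  have hw : w ∈ Submodule.span K (Set.range ![v₁, v₂]) := by
    rw [hli.span_eq_top_of_card_eq_finrank (by simp [hV])]; trivial
  obtain ⟨c, hc⟩ := Submodule.mem_span_range_iff_exists_fun K |>.mp hw
  exact ⟨c 0, c 1, by simpa [Fin.sum_univ_two] using hc⟩

theorem Complex.tendsto_exp_ofReal_mul_atBot {z : ℂ} (hz : 0 < z.re) :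
    Tendsto (fun x : ℝ => Complex.exp (x * z)) atBot (𝓝 0) := by
  rw [tendsto_zero_iff_norm_tendsto_zero]
  simp only [Complex.norm_exp, Complex.re_ofReal_mul]
  exact Real.tendsto_exp_atBot.comp (tendsto_id.atBot_mul_const hz)

lemma projLine_smul {c : ℂ} (hc : c ≠ 0) (w : Fin 2 → ℂ) : projLine (c • w) = projLine w := by
  have hc2 : (‖c‖ : ℂ) ^ 2 ≠ 0 := by simpa using hc
  ext i j
  simp only [projLine, Pi.smul_apply, smul_eq_mul, norm_mul, mul_pow, vecMulVec_apply, map_mul,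
    Matrix.smul_apply]
  rw [mul_mul_mul_comm, Complex.mul_conj', ← mul_add, Complex.ofReal_mul, Complex.ofReal_pow,
    mul_inv, mul_mul_mul_comm, inv_mul_cancel₀ hc2, one_mul]

lemma norm_sq_add_norm_sq_pos {w : Fin 2 → ℂ} (hw : w ≠ 0) : 0 < ‖w 0‖ ^ 2 + ‖w 1‖ ^ 2 := by
  have : w 0 ≠ 0 ∨ w 1 ≠ 0 := by
    by_contra! h
    exact hw (funext fun i => by fin_cases i <;> simp [h])
  rcases this with h | h
  · have := norm_pos_iff.mpr h; positivity
  · have := norm_pos_iff.mpr h; positivity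

lemma continuousAt_projLine {v : Fin 2 → ℂ} (hv : v ≠ 0) : ContinuousAt projLine v := by
  have hS := norm_sq_add_norm_sq_pos hv
  unfold projLine
  fun_prop (disch := exact_mod_cast hS.ne')

section Flow

variable {A : Matrix (Fin 2) (Fin 2) ℂ} {vp vm : Fin 2 → ℂ} {cp cm : ℂ}

lemma exp_smul_mulVec_smul_add_smul (hp : A *ᵥ vp = cp • vp) (hm : A *ᵥ vm = cm • vm)
    (x : ℝ) (a : ℂ) {b : ℂ} (hb : b ≠ 0) :
    exp ((x : ℂ) • A) *ᵥ (a • vp + b • vm)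
      = (b * Complex.exp (x * cm)) • ((Complex.exp (x * (cp - cm)) * (a / b)) • vp + vm) := by
  have hx : ∀ {v : Fin 2 → ℂ} {c : ℂ}, A *ᵥ v = c • v → ((x : ℂ) • A) *ᵥ v = (x * c) • v :=
    fun h => by rw [smul_mulVec, h, smul_smul]
  rw [mulVec_add, mulVec_smul, mulVec_smul, exp_mulVec_of_mulVec_eq_smul (hx hp),
    exp_mulVec_of_mulVec_eq_smul (hx hm), ← Complex.exp_eq_exp_ℂ, smul_add, smul_smul, smul_smul,
    smul_smul, mul_sub, Complex.exp_sub]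
  congr 2
  field_simp

lemma tendsto_projLine_exp_smul_mulVec_atBot (hp : A *ᵥ vp = cp • vp) (hm : A *ᵥ vm = cm • vm)
    (hlt : cm.re < cp.re) (hvm : vm ≠ 0) (a : ℂ) {b : ℂ} (hb : b ≠ 0) :
    Tendsto (fun x : ℝ => projLine (exp ((x : ℂ) • A) *ᵥ (a • vp + b • vm))) atBot
      (𝓝 (projLine vm)) := by
  simp_rw [exp_smul_mulVec_smul_add_smul hp hm _ a hb,
    projLine_smul (mul_ne_zero hb (Complex.exp_ne_zero _))]
  have hcoef : Tendsto (fun x : ℝ => Complex.exp (x * (cp - cm)) * (a / b)) atBot (𝓝 0) := by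
    simpa using (Complex.tendsto_exp_ofReal_mul_atBot (by simpa using hlt)).mul_const (a / b)
  have hvec := (hcoef.smul_const vp).add_const vm
  rw [zero_smul, zero_add] at hvec
  exact (continuousAt_projLine hvm).tendsto.comp hvec

end Flow

theorem stmt8_general (A : Matrix (Fin 2) (Fin 2) ℂ) (μ : ℝ) (hμ : 0 < μ)
    (vp vm : Fin 2 → ℂ) (hvp : vp ≠ 0) (hvm : vm ≠ 0)
    (hep : A.mulVec vp = (μ : ℂ) • vp) (hem : A.mulVec vm = (-μ : ℂ) • vm) :
    ∀ w : Fin 2 → ℂ, w ≠ 0 → projLine w ≠ projLine vp →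
      Tendsto (fun x : ℝ => projLine ((NormedSpace.exp ((x : ℂ) • A)).mulVec w))
        atBot (nhds (projLine vm)) := by
  intro w hw hwp
  have hne : (μ : ℂ) ≠ -μ := by
    simpa [eq_neg_iff_add_eq_zero, ← two_mul] using hμ.ne'
  obtain ⟨a, b, rfl⟩ := Module.End.exists_smul_add_smul_eq_of_hasEigenvector (by simp)
    (Matrix.hasEigenvector_toLin' hep hvp) (Matrix.hasEigenvector_toLin' hem hvm) hne w
  have hb : b ≠ 0 := by
    rintro rfl
    have ha : a ≠ 0 := by rintro rfl; simp at hw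
    simp only [zero_smul, add_zero] at hwp
    exact hwp (projLine_smul ha vp)
  exact tendsto_projLine_exp_smul_mulVec_atBot hep hem (by simpa using hμ) hvm a hb

/-- If `A ∈ sl(2,ℂ)` has a real positive eigenvalue `μ` with eigenvectors `v₊` (for `μ`) and
`v₋` (for `-μ`), then for every line `L ≠ L₊` the line `exp(xA)·L` converges to `L₋` in `ℂP¹`
as `x → -∞`. -/
theorem stmt8 (A : Matrix (Fin 2) (Fin 2) ℂ) (htr : A.trace = 0) (μ : ℝ) (hμ : 0 < μ)
    (vp vm : Fin 2 → ℂ) (hvp : vp ≠ 0) (hvm : vm ≠ 0)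
    (hep : A.mulVec vp = (μ : ℂ) • vp) (hem : A.mulVec vm = (-μ : ℂ) • vm) :
    ∀ w : Fin 2 → ℂ, w ≠ 0 → projLine w ≠ projLine vp →
      Tendsto (fun x : ℝ => projLine ((NormedSpace.exp ((x : ℂ) • A)).mulVec w))
        atBot (nhds (projLine vm)) :=
  stmt8_general A μ hμ vp vm hvp hvm hep hem
end

section
/- Let Σ be a neighborhood of 0 in C, n a positive integer, κ ∈ C, and let σ(z) = z + (κ/n)z^{n+1} + O(z^{n+2}) be analytic with σ(0) = 0, σ'(0) = 1. Then on a possibly smaller neighborhood, the 1-form (z^{-1} + κz^{n-1})dz equals (σ^{-1} + O(σⁿ))dσ; consequently the inverse coordinate change φ = σ^{-1} pulls back any 1-form of the shape Az^{-1}dz + κA z^{n-1}dz + O(zⁿ)dz to Aw^{-1}dw + O(wⁿ)dw. -/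
/-!
Write `σ z = z * u z` with `u = 1 + c zⁿ + z^{n+1} τ` and `c = κ / n`. Then
`σ'/σ = z⁻¹ + u'/u`, and `u' = n c z^{n-1} + O(zⁿ) = κ z^{n-1} + O(zⁿ)`, so
`z⁻¹ + κ z^{n-1} - σ'/σ = (κ z^{n-1} u - u') / u` vanishes to order `n`; dividing it by `σⁿ σ'`,
which is `zⁿ` times a unit, gives the analytic coefficient `g`.
For the pullback, the chain rule `σ'(φ w) φ'(w) = 1` turns `φ' · (σ⁻¹ + g σⁿ) σ' ∘ φ` into
`w⁻¹ + g(φ w) wⁿ`, and `φ w = w ψ(w)` with `ψ` analytic makes `φ' φⁿ E(φ)` equal to `wⁿ` times an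
analytic matrix.
-/

open Filter Topology

theorem inv_add_mul_pow_eq_of_remainder {K : Type*} [Field K] {n : ℕ} {κ z u u' N : K}
    (hz : z ≠ 0) (hu : u ≠ 0) (hD : u + z * u' ≠ 0)
    (hN : κ * z ^ (n - 1) * u - u' = z ^ n * N) :
    z⁻¹ + κ * z ^ (n - 1) =
      ((z * u)⁻¹ + N / (u ^ (n + 1) * (u + z * u')) * (z * u) ^ n) * (u + z * u') := by
  field_simp
  linear_combination z * u ^ (n + 1) * hN

section Normalization

variable (c κ : ℂ) (n : ℕ) (τ : ℂ → ℂ)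

def unitFactor (z : ℂ) : ℂ := 1 + c * z ^ n + z ^ (n + 1) * τ z

noncomputable def logFormRemainder (z : ℂ) : ℂ :=
  κ * z ^ (n - 1) * (c + z * τ z) - (n + 1) * τ z - z * deriv τ z

variable {c κ n τ} {σ : ℂ → ℂ} {U : Set ℂ}

theorem hasDerivAt_unitFactor {z : ℂ} (hτ : DifferentiableAt ℂ τ z) :
    HasDerivAt (unitFactor c n τ)
      (c * n * z ^ (n - 1) + ((n + 1) * z ^ n * τ z + z ^ (n + 1) * deriv τ z)) z := by
  have := (((hasDerivAt_pow n z).const_mul c).const_add 1).fun_add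
    ((hasDerivAt_pow (n + 1) z).fun_mul hτ.hasDerivAt)
  refine this.congr_deriv ?_
  simp only [Nat.add_sub_cancel, Nat.cast_add, Nat.cast_one]
  ring

theorem analyticAt_unitFactor {z : ℂ} (hτ : AnalyticAt ℂ τ z) :
    AnalyticAt ℂ (unitFactor c n τ) z := by
  unfold unitFactor
  fun_prop

theorem mul_unitFactor_sub_deriv_eq_pow_mul_logFormRemainder (hκ : c * n = κ) {z : ℂ}
    (hτ : DifferentiableAt ℂ τ z) :
    κ * z ^ (n - 1) * unitFactor c n τ z - deriv (unitFactor c n τ) z =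
      z ^ n * logFormRemainder c κ n τ z := by
  rw [(hasDerivAt_unitFactor hτ).deriv, unitFactor, logFormRemainder, ← hκ]
  ring

theorem hasDerivAt_of_eq_mul_unitFactor {z : ℂ} (hz : U ∈ 𝓝 z) (hτ : DifferentiableAt ℂ τ z)
    (hexp : ∀ y ∈ U, σ y = y * unitFactor c n τ y) :
    HasDerivAt σ (unitFactor c n τ z + z * deriv (unitFactor c n τ) z) z := by
  have := (hasDerivAt_id' z).fun_mul
    (hasDerivAt_unitFactor (c := c) (n := n) hτ).differentiableAt.hasDerivAt
  simp only [one_mul] at this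
  exact this.congr_of_eventuallyEq (eventually_of_mem hz hexp)

theorem exists_inv_add_mul_pow_eq_mul_deriv (hU : U ∈ 𝓝 0)
    (hσ : AnalyticOnNhd ℂ σ U) (hσ'0 : deriv σ 0 = 1) (hτ : AnalyticOnNhd ℂ τ U)
    (hκ : c * n = κ) (hexp : ∀ z ∈ U, σ z = z * unitFactor c n τ z) :
    ∃ W ∈ 𝓝 (0 : ℂ), ∃ g : ℂ → ℂ, AnalyticOnNhd ℂ g W ∧
      ∀ z ∈ W, z ≠ 0 → z⁻¹ + κ * z ^ (n - 1) = ((σ z)⁻¹ + g z * σ z ^ n) * deriv σ z := by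
  have hU0 : (0 : ℂ) ∈ U := mem_of_mem_nhds hU
  have hu0 : unitFactor c n τ 0 ≠ 0 := by
    have h := (hasDerivAt_of_eq_mul_unitFactor hU (hτ 0 hU0).differentiableAt hexp).deriv
    rw [hσ'0, zero_mul, add_zero] at h
    exact h ▸ one_ne_zero
  have hW : ∀ᶠ z in 𝓝 (0 : ℂ),
      (∀ᶠ y in 𝓝 z, y ∈ U) ∧ unitFactor c n τ z ≠ 0 ∧ deriv σ z ≠ 0 :=
    (eventually_eventually_nhds.mpr hU).and <|
      ((analyticAt_unitFactor (hτ 0 hU0)).continuousAt.eventually_ne hu0).and <|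
        (hσ 0 hU0).deriv.continuousAt.eventually_ne (by simp [hσ'0])
  refine ⟨_, hW, fun z => logFormRemainder c κ n τ z / (unitFactor c n τ z ^ (n + 1) * deriv σ z),
    ?_, ?_⟩
  · rintro z ⟨hzU, huz, hσz⟩
    have hτz := hτ z hzU.self_of_nhds
    have hτz' := hτz.deriv
    have hN : AnalyticAt ℂ (logFormRemainder c κ n τ) z := by
      unfold logFormRemainder
      fun_prop
    exact hN.div (((analyticAt_unitFactor hτz).pow _).mul (hσ z hzU.self_of_nhds).deriv)
      (mul_ne_zero (pow_ne_zero _ huz) hσz)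
  · rintro z ⟨hzU, huz, hσz⟩ hz
    have hτz := (hτ z hzU.self_of_nhds).differentiableAt
    dsimp only
    rw [(hasDerivAt_of_eq_mul_unitFactor hzU hτz hexp).deriv] at hσz ⊢
    rw [hexp z hzU.self_of_nhds]
    exact inv_add_mul_pow_eq_of_remainder hz huz hσz
      (mul_unitFactor_sub_deriv_eq_pow_mul_logFormRemainder hκ hτz)

end Normalization

theorem deriv_mul_deriv_eq_one_of_leftInverse {𝕜 : Type*} [NontriviallyNormedField 𝕜]
    {σ φ : 𝕜 → 𝕜} {w : 𝕜} (hσ : DifferentiableAt 𝕜 σ (φ w)) (hφ : DifferentiableAt 𝕜 φ w)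
    (hinv : ∀ᶠ y in 𝓝 w, σ (φ y) = y) :
    deriv σ (φ w) * deriv φ w = 1 :=
  (hσ.hasDerivAt.comp w hφ.hasDerivAt).unique <|
    (hasDerivAt_id w).congr_of_eventuallyEq hinv

theorem exists_analyticOnNhd_eq_mul_of_apply_zero {φ : ℂ → ℂ} {V : Set ℂ} (hV : V ∈ 𝓝 0)
    (hφ : AnalyticOnNhd ℂ φ V) (hφ0 : φ 0 = 0) :
    ∃ ψ : ℂ → ℂ, AnalyticOnNhd ℂ ψ (interior V) ∧ ∀ w, φ w = w * ψ w := by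
  refine ⟨dslope φ 0, ?_, fun w => ?_⟩
  · refine DifferentiableOn.analyticOnNhd ?_ isOpen_interior
    exact (Complex.differentiableOn_dslope (interior_mem_nhds.mpr hV)).mpr
      (hφ.differentiableOn.mono interior_subset)
  · simpa [hφ0] using (sub_smul_dslope φ 0 w).symm

section Pullback

variable {n : ℕ} {f g σ φ : ℂ → ℂ} {U W V : Set ℂ}

theorem deriv_mul_eq_inv_add_mul_pow_of_leftInverse (hσ0 : σ 0 = 0)
    (hf : ∀ z ∈ W, z ≠ 0 → f z = ((σ z)⁻¹ + g z * σ z ^ n) * deriv σ z)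
    (hinv : ∀ w ∈ V, σ (φ w) = w) {w : ℂ} (hwV : V ∈ 𝓝 w) (hσw : DifferentiableAt ℂ σ (φ w))
    (hφw : DifferentiableAt ℂ φ w) (hφwW : φ w ∈ W) (hw : w ≠ 0) :
    deriv φ w * f (φ w) = w⁻¹ + g (φ w) * w ^ n := by
  have hφw0 : φ w ≠ 0 := fun h => hw (by rw [← hinv w (mem_of_mem_nhds hwV), h, hσ0])
  have hchain := deriv_mul_deriv_eq_one_of_leftInverse hσw hφw (eventually_of_mem hwV hinv)
  rw [hf _ hφwW hφw0, hinv w (mem_of_mem_nhds hwV)]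
  linear_combination (w⁻¹ + g (φ w) * w ^ n) * hchain

theorem exists_pullback_eq {ι ι' : Type*} (hU : U ∈ 𝓝 0) (hσ : AnalyticOnNhd ℂ σ U)
    (hσ0 : σ 0 = 0) (hW : W ∈ 𝓝 0) (hg : AnalyticOnNhd ℂ g W)
    (hf : ∀ z ∈ W, z ≠ 0 → f z = ((σ z)⁻¹ + g z * σ z ^ n) * deriv σ z)
    (hV : V ∈ 𝓝 0) (hφ : AnalyticOnNhd ℂ φ V) (hφ0 : φ 0 = 0) (hinv : ∀ w ∈ V, σ (φ w) = w)
    (A : Matrix ι ι' ℂ) (E : ℂ → Matrix ι ι' ℂ) (hE : ∀ i j, AnalyticOnNhd ℂ (fun z => E z i j) U) :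
    ∃ W' ∈ 𝓝 (0 : ℂ), ∃ Fr : ℂ → Matrix ι ι' ℂ,
      (∀ i j, AnalyticOnNhd ℂ (fun w => Fr w i j) W') ∧
      ∀ w ∈ W', w ≠ 0 →
        deriv φ w • (f (φ w) • A + φ w ^ n • E (φ w)) = w⁻¹ • A + w ^ n • Fr w := by
  obtain ⟨ψ, hψ, hφψ⟩ := exists_analyticOnNhd_eq_mul_of_apply_zero hV hφ hφ0
  have hφ_tendsto : Tendsto φ (𝓝 0) (𝓝 0) := by
    simpa [hφ0] using (hφ 0 (mem_of_mem_nhds hV)).continuousAt.tendsto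
  have hW' : ∀ᶠ w in 𝓝 (0 : ℂ), w ∈ interior V ∧ φ w ∈ W ∧ φ w ∈ U :=
    Eventually.and (interior_mem_nhds.mpr hV) <|
      (hφ_tendsto.eventually_mem hW).and (hφ_tendsto.eventually_mem hU)
  refine ⟨_, hW', fun w => g (φ w) • A + (deriv φ w * ψ w ^ n) • E (φ w), ?_, ?_⟩
  · rintro i j w ⟨hwV, hφwW, hφwU⟩
    have hφw := hφ w (interior_subset hwV)
    simp only [Matrix.add_apply, Matrix.smul_apply, smul_eq_mul]
    exact (((hg _ hφwW).comp hφw).mul analyticAt_const).add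
      ((hφw.deriv.mul ((hψ w hwV).pow n)).mul ((hE i j _ hφwU).comp hφw))
  · rintro w ⟨hwV, hφwW, hφwU⟩ hw
    have hφw := (hφ w (interior_subset hwV)).differentiableAt
    have hscalar := deriv_mul_eq_inv_add_mul_pow_of_leftInverse hσ0 hf hinv
      (mem_interior_iff_mem_nhds.mp hwV) (hσ _ hφwU).differentiableAt hφw hφwW hw
    have hpow : φ w ^ n = w ^ n * ψ w ^ n := by rw [hφψ, mul_pow]
    rw [smul_add, smul_smul, hscalar, hpow]
    module

end Pullback

/-- **Coordinate change.**  If `σ(z) = z + (κ/n)z^{n+1} + O(z^{n+2})` with `σ(0) = 0`,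
`σ'(0) = 1`, then near `0` one has `(z⁻¹ + κ z^{n-1})dz = (σ⁻¹ + O(σⁿ))dσ`; consequently the
inverse coordinate change `φ = σ⁻¹` pulls back any `1`-form
`A z⁻¹ dz + κ A z^{n-1} dz + O(zⁿ)dz` to `A w⁻¹ dw + O(wⁿ)dw`. -/
theorem stmt11 (n : ℕ) (hn : 0 < n) (κ : ℂ) (U : Set ℂ) (hU : U ∈ nhds (0 : ℂ))
    (σ : ℂ → ℂ) (hσa : AnalyticOnNhd ℂ σ U) (hσ0 : σ 0 = 0) (hσ'0 : deriv σ 0 = 1)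
    (τ : ℂ → ℂ) (hτ : AnalyticOnNhd ℂ τ U)
    (hexp : ∀ z ∈ U, σ z = z + (κ / n) * z ^ (n + 1) + z ^ (n + 2) * τ z)
    (φ : ℂ → ℂ) (V : Set ℂ) (hV : V ∈ nhds (0 : ℂ)) (hφa : AnalyticOnNhd ℂ φ V)
    (hφ0 : φ 0 = 0) (hinv : ∀ w ∈ V, σ (φ w) = w) :
    (∃ W ∈ nhds (0 : ℂ), ∃ g : ℂ → ℂ, AnalyticOnNhd ℂ g W ∧
      ∀ z ∈ W, z ≠ 0 →
        z⁻¹ + κ * z ^ (n - 1) = ((σ z)⁻¹ + g z * σ z ^ n) * deriv σ z) ∧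
    ∀ (A : Matrix (Fin 2) (Fin 2) ℂ) (E : ℂ → Matrix (Fin 2) (Fin 2) ℂ),
      (∀ i j, AnalyticOnNhd ℂ (fun z => E z i j) U) →
      ∃ W ∈ nhds (0 : ℂ), ∃ Fr : ℂ → Matrix (Fin 2) (Fin 2) ℂ,
        (∀ i j, AnalyticOnNhd ℂ (fun w => Fr w i j) W) ∧
        ∀ w ∈ W, w ≠ 0 →
          deriv φ w • (((φ w)⁻¹ + κ * φ w ^ (n - 1)) • A + φ w ^ n • E (φ w)) =
            w⁻¹ • A + w ^ n • Fr w := by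
  have hκ : κ / n * n = κ := div_mul_cancel₀ κ (Nat.cast_ne_zero.mpr hn.ne')
  have hexp' : ∀ z ∈ U, σ z = z * unitFactor (κ / n) n τ z := fun z hz => by
    rw [hexp z hz, unitFactor]
    ring
  obtain ⟨W, hW, g, hg, hform⟩ := exists_inv_add_mul_pow_eq_mul_deriv hU hσa hσ'0 hτ hκ hexp'
  exact ⟨⟨W, hW, g, hg, hform⟩, fun A E hE =>
    exists_pullback_eq hU hσa hσ0 hW hg hform hV hφa hφ0 hinv A E hE⟩
end

section
/- Let f be a rational map of degree one on CP¹ with a pole at λ₀ (with |λ₀| ≠ 0, 1) satisfying f* = 1/f, where f*(λ) := conjugate(f(1/λ̄)), and f(1) = 1. Let L ∈ CP¹ and let π_L denote orthogonal projection onto L. Define h = f^{1/2}π_L + f^{-1/2}π_{L⊥}. Then for any meromorphic 2×2 matrix map X on a domain R invariant under λ ↦ 1/λ̄ with X* = X, the conjugate hXh^{-1} extends meromorphically to R and satisfies (hXh^{-1})* = hXh^{-1} away from its poles. -/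
open Matrix

/-- **Simple factor conjugation (hermitian case).**  Let `h = f^{1/2}π_L + f^{-1/2}π_{L⊥}` be
an unnormalized simple factor with singularity `λ₀` (`f` the degree-one rational map with
pole `λ₀`, `f* = 1/f`, `f(1) = 1`; `s` a square root of `f`).  For any meromorphic matrix map
`X` on a reflection-invariant domain `R` with `X* = X`, the conjugate `hXh⁻¹` extends
meromorphically to `R` (as the explicit map `Y`) and satisfies `Y* = Y` away from the
poles. -/
theorem stmt14 (R : Set ℂ) (hR0 : (0 : ℂ) ∉ R)
    (hRsym : ∀ lam ∈ R, (starRingEnd ℂ lam)⁻¹ ∈ R)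
    (lam0 : ℂ) (hlam0 : 0 < ‖lam0‖) (hlam1 : ‖lam0‖ ≠ 1)
    (f : ℂ → ℂ)
    (hfrat : ∀ lam : ℂ, lam ≠ lam0 → f lam =
      ((1 - lam0) * (lam - (starRingEnd ℂ lam0)⁻¹)) /
        ((1 - (starRingEnd ℂ lam0)⁻¹) * (lam - lam0)))
    (hfsym : ∀ lam ∈ R, f lam ≠ 0 →
      starRingEnd ℂ (f ((starRingEnd ℂ lam)⁻¹)) * f lam = 1)
    (s : ℂ → ℂ) (hs : ∀ lam, s lam ^ 2 = f lam)
    (Pm : Matrix (Fin 2) (Fin 2) ℂ)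
    (hP1 : Pm * Pm = Pm) (hP2 : Pmᴴ = Pm) (hP3 : Pm.trace = 1)
    (h : ℂ → Matrix (Fin 2) (Fin 2) ℂ)
    (hh : h = fun lam => s lam • Pm + (s lam)⁻¹ • ((1 : Matrix (Fin 2) (Fin 2) ℂ) - Pm))
    (Xm : ℂ → Matrix (Fin 2) (Fin 2) ℂ)
    (hXm : ∀ i j, MeromorphicOn (fun lam => Xm lam i j) R)
    (hXsym : ∀ lam ∈ R, (Xm ((starRingEnd ℂ lam)⁻¹))ᴴ = Xm lam)
    (Y : ℂ → Matrix (Fin 2) (Fin 2) ℂ)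
    (hY : Y = fun lam =>
      Pm * Xm lam * Pm + f lam • (Pm * Xm lam * ((1 : Matrix (Fin 2) (Fin 2) ℂ) - Pm)) +
      (f lam)⁻¹ • (((1 : Matrix (Fin 2) (Fin 2) ℂ) - Pm) * Xm lam * Pm) +
      ((1 : Matrix (Fin 2) (Fin 2) ℂ) - Pm) * Xm lam *
        ((1 : Matrix (Fin 2) (Fin 2) ℂ) - Pm)) :
    (∀ lam ∈ R, s lam ≠ 0 → IsUnit (h lam) ∧ Y lam = h lam * Xm lam * (h lam)⁻¹) ∧
    (∀ i j, MeromorphicOn (fun lam => Y lam i j) R) ∧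
    (∀ lam ∈ R, f lam ≠ 0 → (Y ((starRingEnd ℂ lam)⁻¹))ᴴ = Y lam) := by
  subst hh hY
  set Q : Matrix (Fin 2) (Fin 2) ℂ := 1 - Pm with hQdef
  have hQ2 : Qᴴ = Q := by simp [hQdef, hP2]
  have hPQ : Pm * Q = 0 := by simp [hQdef, Matrix.mul_sub, hP1]
  have hQP : Q * Pm = 0 := by simp [hQdef, Matrix.sub_mul, hP1]
  have hQQ : Q * Q = Q := by
    simp [hQdef, Matrix.mul_sub, Matrix.sub_mul, hP1]
  refine ⟨?_, ?_, ?_⟩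
  · intro lam hlam hsl
    have e1 : s lam * s lam = f lam := by rw [← hs lam]; ring
    have e2 : (s lam)⁻¹ * (s lam)⁻¹ = (f lam)⁻¹ := by rw [← mul_inv, e1]
    have hmul : (s lam • Pm + (s lam)⁻¹ • Q) * ((s lam)⁻¹ • Pm + s lam • Q) = 1 := by
      simp [Matrix.add_mul, Matrix.mul_add, Matrix.smul_mul, Matrix.mul_smul,
        smul_smul, hPQ, hQP, hP1, hQQ, mul_inv_cancel₀ hsl, inv_mul_cancel₀ hsl, hQdef,
        Matrix.mul_sub, Matrix.sub_mul]
    have hmul' : ((s lam)⁻¹ • Pm + s lam • Q) * (s lam • Pm + (s lam)⁻¹ • Q) = 1 :=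
      mul_eq_one_comm.mp hmul
    refine ⟨⟨⟨_, _, hmul, hmul'⟩, rfl⟩, ?_⟩
    rw [Matrix.inv_eq_right_inv hmul]
    simp only [Matrix.add_mul, Matrix.mul_add, Matrix.smul_mul, Matrix.mul_smul,
      smul_add, smul_smul, e1, e2, mul_inv_cancel₀ hsl, inv_mul_cancel₀ hsl, one_smul]
    abel
  · have hfm : MeromorphicOn f R := by
      intro x hx
      have hg : MeromorphicAt (fun lam => ((1 - lam0) * (lam - (starRingEnd ℂ lam0)⁻¹)) /
          ((1 - (starRingEnd ℂ lam0)⁻¹) * (lam - lam0))) x := by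
        refine MeromorphicAt.div ?_ ?_ <;> apply AnalyticAt.meromorphicAt
        · exact analyticAt_const.mul (analyticAt_id.sub analyticAt_const)
        · exact analyticAt_const.mul (analyticAt_id.sub analyticAt_const)
      apply hg.congr
      have hev : ∀ᶠ lam in nhdsWithin x {x}ᶜ, lam ≠ lam0 := by
        rcases eq_or_ne x lam0 with rfl | hne
        · exact self_mem_nhdsWithin
        · exact Filter.eventually_iff_exists_mem.mpr
            ⟨{lam0}ᶜ, nhdsWithin_le_nhds (isOpen_compl_singleton.mem_nhds hne),
             fun y hy => hy⟩
      filter_upwards [hev] with lam hlam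
      exact (hfrat lam hlam).symm
    have hsum : ∀ (F : Fin 2 → ℂ → ℂ), (∀ k, MeromorphicOn (F k) R) →
        MeromorphicOn (fun lam => ∑ k, F k lam) R := by
      intro F hF x hx
      have := (hF 0 x hx).add (hF 1 x hx)
      have he : (fun lam => ∑ k, F k lam) = F 0 + F 1 := by
        funext lam; simp [Fin.sum_univ_two]
      rw [he]; exact this
    have hent : ∀ (C D : Matrix (Fin 2) (Fin 2) ℂ) (i j : Fin 2),
        MeromorphicOn (fun lam => (C * Xm lam * D) i j) R := by
      intro C D i j
      simp only [Matrix.mul_apply]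
      apply hsum
      intro k x hx
      refine MeromorphicAt.mul ?_ (MeromorphicAt.const _ x)
      exact hsum (fun l lam => C i l * Xm lam l k)
        (fun l x' hx' => (MeromorphicAt.const _ x').mul (hXm l k x' hx')) x hx
    intro i j
    simp only [Matrix.add_apply, Matrix.smul_apply, smul_eq_mul]
    intro x hx
    exact (((hent Pm Pm i j x hx).add ((hfm x hx).mul (hent Pm Q i j x hx))).add
      (((hfm x hx).inv).mul (hent Q Pm i j x hx))).add (hent Q Q i j x hx)
  · intro lam hlam hf0
    have h1 : starRingEnd ℂ (f ((starRingEnd ℂ lam)⁻¹)) = (f lam)⁻¹ :=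
      eq_inv_of_mul_eq_one_left (hfsym lam hlam hf0)
    have h1' : star (f ((starRingEnd ℂ lam)⁻¹)) = (f lam)⁻¹ := h1
    have h2' : (star (f ((starRingEnd ℂ lam)⁻¹)))⁻¹ = f lam := by
      rw [h1', inv_inv]
    simp only [Matrix.conjTranspose_add, Matrix.conjTranspose_mul,
      Matrix.conjTranspose_smul, hP2, hQ2, hXsym lam hlam, star_inv₀, h1', h2', inv_inv]
    simp only [Matrix.mul_assoc]
    abel
end

section
/- Let λ₀ ∈ C with 0 < |λ₀| < 1, let L₁, L₂ : Σ* → CP¹ be continuous families of lines on a punctured neighborhood of 0 that both converge as z → 0, and for each z let h_k(z) = f^{1/2}π_{L_k(z)} + f^{-1/2}π_{L_k(z)⊥} be unnormalized simple factors with the same singularity λ₀. If lim_{z→0} L₁(z) = lim_{z→0} L₂(z) in CP¹, then on every region R ⊂ CP¹ bounded away from {λ₀, 1/λ̄₀}, sup_R ‖h₁(z)h₂(z)^{-1} - I‖ → 0 as z → 0. -/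
open Matrix Filter Topology
open scoped Matrix.Norms.L2Operator

/-!
With `c² = f`, the inverse of `h₂ = c π₂ + c⁻¹ (1 - π₂)` is `c⁻¹ π₂ + c (1 - π₂)` because `π₂` is
idempotent, and expanding gives
`h₁ h₂⁻¹ - 1 = (f - 1) π₁ (1 - π₂) + (f⁻¹ - 1) (1 - π₁) π₂`.
Away from the pole `λ₀` and the zero `1/λ̄₀`, both `f` and `f⁻¹` are bounded, while the two cross
terms tend to `P₀ (1 - P₀) = 0` and `(1 - P₀) P₀ = 0`.
-/

section SimpleFactor

variable {𝕜 A : Type*} [Field 𝕜] [Ring A] [Algebra 𝕜 A]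

/-- For `c² = f` and `P = π_L`, this is the unnormalized simple factor `f^{1/2} π_L + f^{-1/2} π_{L⊥}`. -/
def simpleFactor (c : 𝕜) (P : A) : A := c • P + c⁻¹ • (1 - P)

lemma simpleFactor_mul_simpleFactor_inv_sub_one {c : 𝕜} (hc : c ≠ 0) (P Q : A) :
    simpleFactor c P * simpleFactor c⁻¹ Q - 1 =
      (c ^ 2 - 1) • (P * (1 - Q)) + ((c ^ 2)⁻¹ - 1) • ((1 - P) * Q) := by
  simp only [simpleFactor, inv_inv, add_mul, mul_add, smul_mul_smul_comm, mul_sub, sub_mul,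
    mul_one, one_mul, sub_smul, one_smul, smul_sub]
  rw [mul_inv_cancel₀ hc, inv_mul_cancel₀ hc, ← mul_inv, ← sq]
  simp only [one_smul]
  abel

lemma simpleFactor_mul_simpleFactor_inv {c : 𝕜} (hc : c ≠ 0) {P : A} (hP : IsIdempotentElem P) :
    simpleFactor c P * simpleFactor c⁻¹ P = 1 := by
  rw [← sub_eq_zero, simpleFactor_mul_simpleFactor_inv_sub_one hc, hP.mul_one_sub_self,
    hP.one_sub_mul_self, smul_zero, smul_zero, add_zero]

end SimpleFactor

section MatrixSimpleFactor

variable {n : Type*} [Fintype n] [DecidableEq n]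

lemma Matrix.inv_simpleFactor {𝕜 : Type*} [Field 𝕜] {c : 𝕜} (hc : c ≠ 0) {P : Matrix n n 𝕜}
    (hP : IsIdempotentElem P) : (simpleFactor c P)⁻¹ = simpleFactor c⁻¹ P :=
  Matrix.inv_eq_right_inv (simpleFactor_mul_simpleFactor_inv hc hP)

lemma Matrix.norm_simpleFactor_mul_inv_sub_one_le {𝕜 : Type*} [RCLike 𝕜] {c : 𝕜} (hc : c ≠ 0)
    (P : Matrix n n 𝕜) {Q : Matrix n n 𝕜} (hQ : IsIdempotentElem Q) {K : ℝ}
    (hK : ‖c ^ 2 - 1‖ ≤ K) (hK' : ‖(c ^ 2)⁻¹ - 1‖ ≤ K) :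
    ‖simpleFactor c P * (simpleFactor c Q)⁻¹ - 1‖ ≤ K * (‖P * (1 - Q)‖ + ‖(1 - P) * Q‖) := by
  rw [Matrix.inv_simpleFactor hc hQ, simpleFactor_mul_simpleFactor_inv_sub_one hc, mul_add]
  refine (norm_add_le _ _).trans (add_le_add ?_ ?_) <;> rw [norm_smul] <;> gcongr

end MatrixSimpleFactor

lemma Filter.Tendsto.mul_one_sub_of_isIdempotentElem {α R : Type*} [Ring R] [TopologicalSpace R]
    [IsTopologicalRing R] {l : Filter α} {P Q : α → R} {P₀ : R} (hP : Tendsto P l (𝓝 P₀))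
    (hQ : Tendsto Q l (𝓝 P₀)) (h₀ : IsIdempotentElem P₀) :
    Tendsto (fun z => P z * (1 - Q z)) l (𝓝 0) := by
  simpa [h₀.mul_one_sub_self] using hP.mul (hQ.const_sub 1)

section Mobius

variable {𝕜 : Type*} [NormedField 𝕜]

lemma norm_sub_div_sub_le {a b x : 𝕜} {δ : ℝ} (hδ : 0 < δ) (hx : δ ≤ dist x a) :
    ‖(x - b) / (x - a)‖ ≤ 1 + ‖a - b‖ / δ := by
  rw [dist_eq_norm] at hx
  have hxa : 0 < ‖x - a‖ := hδ.trans_le hx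
  calc ‖(x - b) / (x - a)‖ ≤ (‖x - a‖ + ‖a - b‖) / ‖x - a‖ := by
        rw [norm_div]
        gcongr
        simpa using norm_add_le (x - a) (a - b)
    _ = 1 + ‖a - b‖ / ‖x - a‖ := by field_simp
    _ ≤ 1 + ‖a - b‖ / δ := by gcongr

lemma exists_norm_mul_sub_div_sub_sub_one_le {C : 𝕜} (hC : C ≠ 0) (a b : 𝕜) {δ : ℝ}
    (hδ : 0 < δ) : ∃ K, ∀ x, δ ≤ dist x a → δ ≤ dist x b →
      C * ((x - b) / (x - a)) ≠ 0 ∧ ‖C * ((x - b) / (x - a)) - 1‖ ≤ K ∧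
        ‖(C * ((x - b) / (x - a)))⁻¹ - 1‖ ≤ K := by
  have hsub_one : ∀ (y : 𝕜) (M : ℝ), ‖y‖ ≤ M → ‖y - 1‖ ≤ M + 1 := fun y M hy =>
    (norm_sub_le y 1).trans (by rw [norm_one]; linarith)
  refine ⟨max ‖C‖ ‖C⁻¹‖ * (1 + ‖a - b‖ / δ) + 1,
    fun x ha hb => ⟨?_, hsub_one _ _ ?_, hsub_one _ _ ?_⟩⟩
  · exact mul_ne_zero hC (div_ne_zero (sub_ne_zero.2 (dist_pos.1 (hδ.trans_le hb)))
      (sub_ne_zero.2 (dist_pos.1 (hδ.trans_le ha))))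
  · rw [norm_mul]
    gcongr
    · exact le_max_left _ _
    · exact norm_sub_div_sub_le hδ ha
  · rw [mul_inv, inv_div, norm_mul, norm_sub_rev a b]
    gcongr
    · exact le_max_right _ _
    · exact norm_sub_div_sub_le hδ hb

end Mobius

lemma exists_norm_sub_one_le_away_from_pole_and_zero {lam0 : ℂ} (hlam0 : lam0 ≠ 1) {f : ℂ → ℂ}
    (hfrat : ∀ lam : ℂ, lam ≠ lam0 → f lam =
      ((1 - lam0) * (lam - (starRingEnd ℂ lam0)⁻¹)) /
        ((1 - (starRingEnd ℂ lam0)⁻¹) * (lam - lam0)))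
    {δ : ℝ} (hδ : 0 < δ) :
    ∃ K, ∀ lam, δ ≤ dist lam lam0 → δ ≤ dist lam (starRingEnd ℂ lam0)⁻¹ →
      f lam ≠ 0 ∧ ‖f lam - 1‖ ≤ K ∧ ‖(f lam)⁻¹ - 1‖ ≤ K := by
  set u := (starRingEnd ℂ lam0)⁻¹
  have hu : u ≠ 1 := by
    rw [Ne, inv_eq_one, map_eq_one_iff _ (RingHom.injective _)]
    exact hlam0
  have hC : (1 - lam0) / (1 - u) ≠ 0 :=
    div_ne_zero (sub_ne_zero.2 hlam0.symm) (sub_ne_zero.2 hu.symm)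
  obtain ⟨K, hK⟩ := exists_norm_mul_sub_div_sub_sub_one_le hC lam0 u hδ
  refine ⟨K, fun lam ha hb => ?_⟩
  rw [hfrat lam (dist_pos.1 (hδ.trans_le ha)), mul_div_mul_comm]
  exact hK lam ha hb

theorem stmt15_general (lam0 : ℂ) (h1 : ‖lam0‖ < 1)
    (f : ℂ → ℂ)
    (hfrat : ∀ lam : ℂ, lam ≠ lam0 → f lam =
      ((1 - lam0) * (lam - (starRingEnd ℂ lam0)⁻¹)) /
        ((1 - (starRingEnd ℂ lam0)⁻¹) * (lam - lam0)))
    (s : ℂ → ℂ) (hs : ∀ lam, s lam ^ 2 = f lam)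
    (P₁ P₂ : ℂ → Matrix (Fin 2) (Fin 2) ℂ) (P₀ : Matrix (Fin 2) (Fin 2) ℂ)
    (hP₂ : ∀ z, P₂ z * P₂ z = P₂ z ∧ (P₂ z)ᴴ = P₂ z ∧ (P₂ z).trace = 1)
    (hP₀ : P₀ * P₀ = P₀ ∧ P₀ᴴ = P₀ ∧ P₀.trace = 1)
    (hc₁ : Tendsto P₁ (nhdsWithin (0 : ℂ) {0}ᶜ) (nhds P₀))
    (hc₂ : Tendsto P₂ (nhdsWithin (0 : ℂ) {0}ᶜ) (nhds P₀))
    (h₁ h₂ : ℂ → ℂ → Matrix (Fin 2) (Fin 2) ℂ)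
    (hh₁ : h₁ = fun z lam =>
      s lam • P₁ z + (s lam)⁻¹ • ((1 : Matrix (Fin 2) (Fin 2) ℂ) - P₁ z))
    (hh₂ : h₂ = fun z lam =>
      s lam • P₂ z + (s lam)⁻¹ • ((1 : Matrix (Fin 2) (Fin 2) ℂ) - P₂ z)) :
    ∀ R : Set ℂ,
      (∃ δ > 0, ∀ lam ∈ R, δ ≤ dist lam lam0 ∧ δ ≤ dist lam ((starRingEnd ℂ lam0)⁻¹)) →
      ∀ ε > 0, ∀ᶠ z in nhdsWithin (0 : ℂ) {0}ᶜ, ∀ lam ∈ R,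
        ‖h₁ z lam * (h₂ z lam)⁻¹ - 1‖ < ε := by
  rintro R ⟨δ, hδ, hR⟩ ε hε
  have hlam0 : lam0 ≠ 1 := by rintro rfl; simp at h1
  obtain ⟨K, hK⟩ := exists_norm_sub_one_le_away_from_pole_and_zero hlam0 hfrat hδ
  have hP₀' : IsIdempotentElem P₀ := hP₀.1
  have hcross : Tendsto (fun z => K * (‖P₁ z * (1 - P₂ z)‖ + ‖(1 - P₁ z) * P₂ z‖))
      (𝓝[≠] 0) (𝓝 0) := by
    simpa using ((hc₁.mul_one_sub_of_isIdempotentElem hc₂ hP₀').norm.add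
      ((hc₁.const_sub 1).mul_one_sub_of_isIdempotentElem (hc₂.const_sub 1)
        hP₀'.one_sub).norm).const_mul K
  filter_upwards [hcross.eventually (gt_mem_nhds hε)] with z hz lam hlam
  obtain ⟨hf0, hfK, hfK'⟩ := hK lam (hR lam hlam).1 (hR lam hlam).2
  have hs0 : s lam ≠ 0 := by rintro h; simp [← hs lam, h] at hf0
  rw [← hs lam] at hfK hfK'
  subst hh₁ hh₂
  exact (norm_simpleFactor_mul_inv_sub_one_le hs0 (P₁ z) (hP₂ z).1 hfK hfK').trans_lt hz

/-- **Simple factor limit.**  If two families of unnormalized simple factors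
`h_k(z) = s·π_{L_k(z)} + s⁻¹·π_{L_k(z)⊥}` share the same singularity `λ₀` (`0 < |λ₀| < 1`)
and the lines `L₁(z)`, `L₂(z)` converge to the same line as `z → 0`, then
`h₁h₂⁻¹ → I` uniformly on every region bounded away from `{λ₀, 1/λ̄₀}`. -/
theorem stmt15 (lam0 : ℂ) (h0 : 0 < ‖lam0‖) (h1 : ‖lam0‖ < 1)
    (f : ℂ → ℂ)
    (hfrat : ∀ lam : ℂ, lam ≠ lam0 → f lam =
      ((1 - lam0) * (lam - (starRingEnd ℂ lam0)⁻¹)) /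
        ((1 - (starRingEnd ℂ lam0)⁻¹) * (lam - lam0)))
    (s : ℂ → ℂ) (hs : ∀ lam, s lam ^ 2 = f lam)
    (P₁ P₂ : ℂ → Matrix (Fin 2) (Fin 2) ℂ) (P₀ : Matrix (Fin 2) (Fin 2) ℂ)
    (hP₁ : ∀ z, P₁ z * P₁ z = P₁ z ∧ (P₁ z)ᴴ = P₁ z ∧ (P₁ z).trace = 1)
    (hP₂ : ∀ z, P₂ z * P₂ z = P₂ z ∧ (P₂ z)ᴴ = P₂ z ∧ (P₂ z).trace = 1)
    (hP₀ : P₀ * P₀ = P₀ ∧ P₀ᴴ = P₀ ∧ P₀.trace = 1)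
    (hc₁ : Tendsto P₁ (nhdsWithin (0 : ℂ) {0}ᶜ) (nhds P₀))
    (hc₂ : Tendsto P₂ (nhdsWithin (0 : ℂ) {0}ᶜ) (nhds P₀))
    (h₁ h₂ : ℂ → ℂ → Matrix (Fin 2) (Fin 2) ℂ)
    (hh₁ : h₁ = fun z lam =>
      s lam • P₁ z + (s lam)⁻¹ • ((1 : Matrix (Fin 2) (Fin 2) ℂ) - P₁ z))
    (hh₂ : h₂ = fun z lam =>
      s lam • P₂ z + (s lam)⁻¹ • ((1 : Matrix (Fin 2) (Fin 2) ℂ) - P₂ z)) :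
    ∀ R : Set ℂ,
      (∃ δ > 0, ∀ lam ∈ R, δ ≤ dist lam lam0 ∧ δ ≤ dist lam ((starRingEnd ℂ lam0)⁻¹)) →
      ∀ ε > 0, ∀ᶠ z in nhdsWithin (0 : ℂ) {0}ᶜ, ∀ lam ∈ R,
        ‖h₁ z lam * (h₂ z lam)⁻¹ - 1‖ < ε :=
  stmt15_general lam0 h1 f hfrat s hs P₁ P₂ P₀ hP₂ hP₀ hc₁ hc₂ h₁ h₂ hh₁ hh₂
end

section
/- Let r > 0 and let f : D_r → C be holomorphic on the disk of radius r with f(λ̄) = conjugate(f(λ)) for all λ, and f(0) a positive real number. Then there exists r₁ ∈ (0, r] such that Re(λ^{-1/2} f(λ)) ≥ 0 for all λ ∈ D_{r₁} \ {0}, where the branch of λ^{-1/2} is chosen to have nonnegative real part. -/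
/-!
Write `s = λ^{1/2} = x + iy`, so `x ≥ 0`, `λ = s²`, `Im λ = 2xy` and `λ^{-1/2} = s̄ / |s|²`;
hence the sign of `Re(λ^{-1/2} f(λ))` is that of `x Re f(λ) + y Im f(λ)`.
The symmetry makes `f` real on the real axis, so local Lipschitz continuity of `f` gives
`|Im f(λ)| ≤ K |Im λ| = 2Kx|y|`, and then `|y Im f(λ)| ≤ 2Kx y² ≤ 2Kx |λ|`.
Since `Re f(λ) → f(0) > 0`, the term `x Re f(λ)` dominates `2Kx|λ|` near `0`.
-/

open Metric Filter Topology ComplexConjugate NNReal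

namespace Complex

lemma re_cpow_neg_half_mul_nonneg {z w : ℂ} {K : ℝ} (hK : 0 ≤ K)
    (hre : 2 * K * ‖z‖ ≤ w.re) (him : |w.im| ≤ K * |z.im|) :
    0 ≤ (z ^ (-(1 / 2) : ℂ) * w).re := by
  set s := z ^ (2⁻¹ : ℂ)
  have hsq : s ^ 2 = z := by
    have := cpow_nat_inv_pow z two_ne_zero; push_cast at this; exact this
  have hs_re : 0 ≤ s.re := by rw [cpow_inv_two_re]; positivity
  have hz_norm : ‖z‖ = s.re ^ 2 + s.im ^ 2 := by
    rw [← hsq, norm_pow, ← normSq_eq_norm_sq, normSq_apply]; ring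
  have hz_im : z.im = 2 * s.re * s.im := by rw [← hsq, sq, mul_im]; ring
  have hinv : z ^ (-(1 / 2) : ℂ) = s⁻¹ := by rw [one_div, cpow_neg]
  have hcross : |s.im * w.im| ≤ 2 * K * s.re * s.im ^ 2 := by
    calc |s.im * w.im| = |s.im| * |w.im| := abs_mul _ _
      _ ≤ |s.im| * (K * |2 * s.re * s.im|) := by rw [← hz_im]; gcongr
      _ = 2 * K * s.re * s.im ^ 2 := by
        rw [abs_mul, abs_mul, abs_two, abs_of_nonneg hs_re, ← sq_abs s.im]; ring
  have hnum : 0 ≤ w.re * s.re + w.im * s.im := by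
    have := mul_le_mul_of_nonneg_left hre hs_re
    rw [hz_norm] at this
    nlinarith [neg_abs_le (s.im * w.im), mul_nonneg (mul_nonneg hK hs_re) (sq_nonneg s.re)]
  rw [hinv, inv_mul_eq_div, div_re, ← add_div]
  exact div_nonneg hnum (normSq_nonneg s)

lemma abs_im_le_of_lipschitzOnWith {f : ℂ → ℂ} {K : ℝ≥0} {s : Set ℂ} {z : ℂ}
    (hf : LipschitzOnWith K f s) (hz : z ∈ s) (hz_re : (z.re : ℂ) ∈ s)
    (hf_re : (f z.re).im = 0) : |(f z).im| ≤ K * |z.im| := by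
  have hdist : dist z z.re = |z.im| := by
    have : z - z.re = z.im * I := by apply Complex.ext <;> simp
    rw [dist_eq, this, norm_mul, norm_I, mul_one, norm_real, Real.norm_eq_abs]
  calc |(f z).im| = |(f z - f z.re).im| := by rw [sub_im, hf_re, sub_zero]
    _ ≤ ‖f z - f z.re‖ := abs_im_le_norm _
    _ ≤ K * |z.im| := by rw [← dist_eq, ← hdist]; exact hf.dist_le_mul z hz _ hz_re

lemma eventually_abs_im_le_of_lipschitzOnWith {f : ℂ → ℂ} {K : ℝ≥0} {s : Set ℂ} {x : ℝ}
    (hs : s ∈ 𝓝 (x : ℂ)) (hf : LipschitzOnWith K f s)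
    (hsym : ∀ᶠ z in 𝓝 (x : ℂ), f (conj z) = conj (f z)) :
    ∀ᶠ z in 𝓝 (x : ℂ), |(f z).im| ≤ K * |z.im| := by
  obtain ⟨ε, hε, hball⟩ := Metric.mem_nhds_iff.mp (inter_mem hs hsym)
  filter_upwards [ball_mem_nhds _ hε] with z hz
  have hz_re : (z.re : ℂ) ∈ ball (x : ℂ) ε := by
    rw [mem_ball, dist_eq] at hz ⊢
    rw [← ofReal_sub, norm_real, Real.norm_eq_abs]
    exact (abs_re_le_norm (z - x)).trans_lt (by simpa using hz)
  have hf_re : (f z.re).im = 0 := by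
    have : f z.re = conj (f z.re) := by
      simpa only [Set.mem_ofPred_eq, conj_ofReal] using (hball hz_re).2
    exact conj_eq_iff_im.mp this.symm
  exact abs_im_le_of_lipschitzOnWith hf (hball hz).1 (hball hz_re).1 hf_re

end Complex

lemma eventually_mul_norm_le_re {f : ℂ → ℂ} (hf : ContinuousAt f 0) (h0 : 0 < (f 0).re)
    (C : ℝ) : ∀ᶠ z in 𝓝 0, C * ‖z‖ ≤ (f z).re := by
  have hlim : Tendsto (fun z ↦ (f z).re - C * ‖z‖) (𝓝 0) (𝓝 ((f 0).re - C * ‖(0 : ℂ)‖)) :=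
    (Complex.continuous_re.continuousAt.comp hf).sub (continuous_norm.continuousAt.const_mul C)
  rw [norm_zero, mul_zero, sub_zero] at hlim
  filter_upwards [hlim.eventually (lt_mem_nhds h0)] with z hz
  exact (sub_pos.mp hz).le

theorem stmt19_general (r : ℝ) (hr : 0 < r) (f : ℂ → ℂ)
    (hf : DifferentiableOn ℂ f (ball (0 : ℂ) r))
    (hsym : ∀ lam ∈ ball (0 : ℂ) r, f (starRingEnd ℂ lam) = starRingEnd ℂ (f lam))
    (hpos : 0 < (f 0).re) :
    ∃ r₁ : ℝ, 0 < r₁ ∧ r₁ ≤ r ∧ ∀ lam ∈ ball (0 : ℂ) r₁, lam ≠ 0 →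
      0 ≤ (lam ^ (-(1 / 2) : ℂ) * f lam).re := by
  have hball : ball (0 : ℂ) r ∈ 𝓝 0 := ball_mem_nhds 0 hr
  have hf0 : AnalyticAt ℂ f 0 := hf.analyticAt hball
  obtain ⟨K, s, hs, hlip⟩ := (hf0.contDiffAt (n := 1)).exists_lipschitzOnWith
  have him : ∀ᶠ z in 𝓝 (0 : ℂ), |(f z).im| ≤ K * |z.im| := by
    simpa using Complex.eventually_abs_im_le_of_lipschitzOnWith (x := 0) (by simpa using hs) hlip
      (by simpa using eventually_of_mem hball hsym)
  have hre := eventually_mul_norm_le_re hf0.continuousAt hpos (2 * K)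
  obtain ⟨ε, hε, hεball⟩ := eventually_nhds_iff_ball.mp (him.and hre)
  refine ⟨min ε r, lt_min hε hr, min_le_right ε r, fun z hz _ ↦ ?_⟩
  obtain ⟨hz_im, hz_re⟩ := hεball z (ball_subset_ball (min_le_left ε r) hz)
  exact Complex.re_cpow_neg_half_mul_nonneg K.coe_nonneg hz_re hz_im

/-- If `f` is holomorphic on the disk of radius `r` with `f(λ̄) = conj(f(λ))` and `f(0)` a
positive real number, then `Re(λ^{-1/2} f(λ)) ≥ 0` on a small enough punctured disk, where
the branch of `λ^{-1/2}` has nonnegative real part. -/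
theorem stmt19 (r : ℝ) (hr : 0 < r) (f : ℂ → ℂ)
    (hf : DifferentiableOn ℂ f (ball (0 : ℂ) r))
    (hsym : ∀ lam ∈ ball (0 : ℂ) r, f (starRingEnd ℂ lam) = starRingEnd ℂ (f lam))
    (him : (f 0).im = 0) (hpos : 0 < (f 0).re) :
    ∃ r₁ : ℝ, 0 < r₁ ∧ r₁ ≤ r ∧ ∀ lam ∈ ball (0 : ℂ) r₁, lam ≠ 0 →
      0 ≤ (lam ^ (-(1 / 2) : ℂ) * f lam).re :=
  stmt19_general r hr f hf hsym hpos
end
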